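/- arXiv:1912.00558 — 4 statements merged into one kernel-verified Lean document; each statement's English description precedes it below -/
import Mathlib

section
/- Let r ≥ 1 be an integer, ħ a nonzero complex number, and x a complex number such that x/ħ + 1/2 is not an integer. Then for every integer d ≥ 0 one has the three-term recurrence Φ^d(x − ħ) − (x − ħ/2)·Φ^d(x) + Φ^{d−1}(x + rħ) = 0 (for d = 0 this reads Φ^0(x − ħ) = (x − ħ/2)·Φ^0(x), using the convention Φ^{−1} = 0). -/
/-- The term `Φ^d(x)` of the wave function for the orbifold Gromov-Witten theory of `ℙ[r]`:
`Φ^d(x) = √(2π) · ((−1)^d/(r^d · d!)) · ħ^(−x/ħ − (r+1)d) / Γ(x/ħ + rd + 1/2)`,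
where `Γ` is the complex Gamma function and powers of `ħ` are principal-branch complex powers. -/
noncomputable def PhiD (r : ℕ) (hbar : ℂ) (d : ℕ) (x : ℂ) : ℂ :=
  (Real.sqrt (2 * Real.pi) : ℂ) * ((-1 : ℂ) ^ d / ((r : ℂ) ^ d * (d.factorial : ℂ))) *
    hbar ^ (-(x / hbar) - ((r : ℂ) + 1) * (d : ℂ)) /
      Complex.Gamma (x / hbar + (r : ℂ) * (d : ℂ) + 1 / 2)

/-! Write `s = x/ħ + rd`. The shift `x ↦ x − ħ` multiplies the power of `ħ` by `ħ` and lowers the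
argument of `Γ` from `s + 1/2` to `s − 1/2`, so `Γ(z + 1) = zΓ(z)` gives
`Φ^d(x − ħ) = (x + rdħ − ħ/2)·Φ^d(x)`. The shift `x ↦ x + rħ` together with `d ↦ d − 1` leaves the
argument of `Γ` unchanged and gives `Φ^{d−1}(x + rħ) = −rdħ·Φ^d(x)`. The two terms `±rdħ·Φ^d(x)`
cancel. -/

section

variable {r : ℕ} {hbar : ℂ}

lemma cpow_add_one_eq_mul (hh : hbar ≠ 0) (a : ℂ) : hbar ^ (a + 1) = hbar * hbar ^ a := by
  rw [Complex.cpow_add _ _ hh, Complex.cpow_one, mul_comm]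

lemma phiD_sub_hbar (hh : hbar ≠ 0) (d : ℕ) {x : ℂ} (hx : x / hbar + r * d - 1 / 2 ≠ 0) :
    PhiD r hbar d (x - hbar) = (x + r * d * hbar - hbar / 2) * PhiD r hbar d x := by
  have hpow : hbar ^ (-((x - hbar) / hbar) - (r + 1) * d)
      = hbar * hbar ^ (-(x / hbar) - (r + 1) * d) := by
    rw [← cpow_add_one_eq_mul hh, sub_div, div_self hh]
    ring_nf
  have hfactor : x + r * d * hbar - hbar / 2 = hbar * (x / hbar + r * d - 1 / 2) := by
    field_simp
  generalize hs : x / hbar + r * d - 1 / 2 = s at hx hfactor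
  have hplus : x / hbar + r * d + 1 / 2 = s + 1 := by rw [← hs]; ring
  have hminus : (x - hbar) / hbar + r * d + 1 / 2 = s := by rw [← hs, sub_div, div_self hh]; ring
  rw [PhiD, PhiD, hpow, hplus, hminus, Complex.Gamma_add_one s hx, hfactor]
  field_simp

lemma phiD_add_mul_hbar (hr : r ≠ 0) (hh : hbar ≠ 0) (d : ℕ) (x : ℂ) :
    PhiD r hbar d (x + r * hbar) = -(r * (d + 1) * hbar) * PhiD r hbar (d + 1) x := by
  have hpow : hbar ^ (-((x + r * hbar) / hbar) - (r + 1) * d)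
      = hbar * hbar ^ (-(x / hbar) - (r + 1) * ((d + 1 : ℕ) : ℂ)) := by
    rw [← cpow_add_one_eq_mul hh, add_div, mul_div_cancel_right₀ _ hh]
    push_cast
    ring_nf
  have harg : (x + r * hbar) / hbar + r * d + 1 / 2 = x / hbar + r * ((d + 1 : ℕ) : ℂ) + 1 / 2 := by
    rw [add_div, mul_div_cancel_right₀ _ hh]
    push_cast
    ring
  have hr' : (r : ℂ) ≠ 0 := Nat.cast_ne_zero.mpr hr
  rw [PhiD, PhiD, hpow, harg, Nat.factorial_succ]
  push_cast
  field_simp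
  ring

end

/-- The three-term recurrence `Φ^d(x − ħ) − (x − ħ/2)·Φ^d(x) + Φ^{d−1}(x + rħ) = 0`,
with the convention `Φ^{−1} = 0`. -/
theorem phiD_three_term_recurrence (r : ℕ) (hr : 1 ≤ r) (hbar : ℂ) (hh : hbar ≠ 0) (x : ℂ)
    (hx : ∀ n : ℤ, x / hbar + 1 / 2 ≠ (n : ℂ)) (d : ℕ) :
    PhiD r hbar d (x - hbar) - (x - hbar / 2) * PhiD r hbar d x +
      (if d = 0 then 0 else PhiD r hbar (d - 1) (x + (r : ℂ) * hbar)) = 0 := by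
  have hpole : x / hbar + r * d - 1 / 2 ≠ 0 := fun h ↦
    hx (1 - r * d) (by push_cast; linear_combination h)
  rw [phiD_sub_hbar hh d hpole]
  cases d with
  | zero => simp
  | succ n =>
    rw [if_neg n.succ_ne_zero, Nat.add_sub_cancel, phiD_add_mul_hbar (by omega) hh]
    push_cast
    ring
end

section
/- Let r ≥ 1 be an integer, ħ a nonzero complex number, t and q complex numbers, and x a complex number such that x/ħ + 1/2 is not an integer. Then the series Φ(t,x) := Σ_{d=0}^∞ q^{rd} e^{tħrd} Φ^d(x) converges absolutely (and likewise the series defining Φ(t, x−ħ) and Φ(t, x+rħ)), and the wave function Φ satisfies the quantum curve equation Φ(t, x−ħ) + q^r e^{rtħ} Φ(t, x+rħ) − (x − ħ/2)·Φ(t,x) = 0; that is, Φ(t,x) is annihilated by Ĥ_t(x, −ħ∂_x) = e^{−ħ∂_x} + q^r e^{rtħ} e^{rħ∂_x} − x + ħ/2. -/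
open Complex Filter Finset

lemma auxGamma {u : ℂ} (hu : ∀ n : ℤ, u ≠ (n : ℂ)) {z : ℂ} (m : ℤ) (hz : z = u + m) :
    Complex.Gamma z ≠ 0 := by
  subst hz
  refine Complex.Gamma_ne_zero fun k => ?_
  intro h
  apply hu (-m - k)
  push_cast
  linear_combination h

lemma auxNe {u : ℂ} (hu : ∀ n : ℤ, u ≠ (n : ℂ)) {z : ℂ} (m : ℤ) (hz : z = u + m) :
    z ≠ 0 := by
  subst hz
  intro h
  apply hu (-m)
  push_cast
  linear_combination h

lemma gammaAddNat (w : ℂ) (hw : ∀ k : ℕ, w + (k:ℂ) ≠ 0) (n : ℕ) :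
    Complex.Gamma (w + (n:ℂ)) = Complex.Gamma w * ∏ j ∈ Finset.range n, (w + (j:ℂ)) := by
  induction n with
  | zero => simp
  | succ n ih =>
    have h : (w + ((n+1 : ℕ) : ℂ)) = (w + (n:ℂ)) + 1 := by push_cast; ring
    rw [h, Complex.Gamma_add_one _ (hw n), ih, Finset.prod_range_succ]
    ring

/-- ratio identity -/
lemma phiD_succ (r : ℕ) (hr : 1 ≤ r) (hbar : ℂ) (hh : hbar ≠ 0) (y : ℂ)
    (hy : ∀ n : ℤ, y / hbar + 1 / 2 ≠ (n : ℂ)) (d : ℕ) :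
    PhiD r hbar (d+1) y =
      (-(hbar ^ (-(r:ℂ) - 1) / ((r : ℂ) * ((d:ℂ) + 1)))) *
        (Complex.Gamma (y/hbar + (r:ℂ)*((d:ℕ):ℂ) + 1/2) /
          Complex.Gamma (y/hbar + (r:ℂ)*((d:ℂ)+1) + 1/2)) * PhiD r hbar d y := by
  have hr0 : (r : ℂ) ≠ 0 := Nat.cast_ne_zero.mpr (by omega)
  have hd0 : ((d.factorial : ℂ)) ≠ 0 := Nat.cast_ne_zero.mpr (Nat.factorial_ne_zero d)
  have hd1 : ((d:ℂ) + 1) ≠ 0 := by exact_mod_cast Nat.cast_add_one_ne_zero (R := ℂ) d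
  have hG1 : Complex.Gamma (y/hbar + (r:ℂ)*((d:ℕ):ℂ) + 1/2) ≠ 0 :=
    auxGamma hy ((r*d : ℕ) : ℤ) (by push_cast; ring)
  have hG2 : Complex.Gamma (y/hbar + (r:ℂ)*((d:ℂ)+1) + 1/2) ≠ 0 :=
    auxGamma hy ((r*(d+1) : ℕ) : ℤ) (by push_cast; ring)
  have hpow : hbar ^ (-(y/hbar) - ((r:ℂ)+1)*((d:ℂ)+1)) =
      hbar ^ (-(y/hbar) - ((r:ℂ)+1)*((d:ℂ))) * hbar ^ (-(r:ℂ) - 1) := by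
    rw [← Complex.cpow_add _ _ hh]
    congr 1
    ring
  unfold PhiD
  push_cast [Nat.factorial_succ]
  rw [hpow]
  generalize hbar ^ (-(y/hbar) - ((r:ℂ)+1)*(d:ℂ)) = P
  generalize hbar ^ (-(r:ℂ) - 1) = Q
  generalize ((Real.sqrt (2*Real.pi) : ℝ) : ℂ) = S
  generalize hGG1 : Complex.Gamma (y/hbar + (r:ℂ)*((d:ℕ):ℂ) + 1/2) = G1 at hG1 ⊢
  generalize hGG2 : Complex.Gamma (y/hbar + (r:ℂ)*((d:ℂ)+1) + 1/2) = G2 at hG2 ⊢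
  generalize hD : ((d:ℂ) + 1) = D at hd1 ⊢
  field_simp [hr0, hd0, hd1, hG1, hG2]
  ring

/-- Φ^d(x-ħ) = (x + rdħ - ħ/2) Φ^d(x) -/
lemma phiD_down (r : ℕ) (hbar : ℂ) (hh : hbar ≠ 0) (x : ℂ)
    (hx : ∀ n : ℤ, x / hbar + 1 / 2 ≠ (n : ℂ)) (d : ℕ) :
    PhiD r hbar d (x - hbar) = (x + (r:ℂ)*(d:ℂ)*hbar - hbar/2) * PhiD r hbar d x := by
  have hdiv : (x - hbar)/hbar = x/hbar - 1 := by field_simp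
  have hw1 : x/hbar + (r:ℂ)*(d:ℂ) + 1/2 - 1 ≠ 0 :=
    auxNe hx ((r*d : ℕ) - 1 : ℤ) (by push_cast; ring)
  have hG0 : Complex.Gamma (x/hbar + (r:ℂ)*(d:ℂ) + 1/2 - 1) ≠ 0 :=
    auxGamma hx ((r*d : ℕ) - 1 : ℤ) (by push_cast; ring)
  have hpow : hbar ^ (-((x-hbar)/hbar) - ((r:ℂ)+1)*(d:ℂ)) =
      hbar * hbar ^ (-(x/hbar) - ((r:ℂ)+1)*(d:ℂ)) := by
    rw [hdiv, show -(x/hbar - 1) - ((r:ℂ)+1)*(d:ℂ) = 1 + (-(x/hbar) - ((r:ℂ)+1)*(d:ℂ)) by ring,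
      Complex.cpow_add _ _ hh, Complex.cpow_one]
  have hΓarg : (x - hbar)/hbar + (r:ℂ)*(d:ℂ) + 1/2 = x/hbar + (r:ℂ)*(d:ℂ) + 1/2 - 1 := by
    rw [hdiv]; ring
  have hΓrec : Complex.Gamma (x/hbar + (r:ℂ)*(d:ℂ) + 1/2) =
      (x/hbar + (r:ℂ)*(d:ℂ) + 1/2 - 1) * Complex.Gamma (x/hbar + (r:ℂ)*(d:ℂ) + 1/2 - 1) := by
    have := Complex.Gamma_add_one _ hw1
    rw [sub_add_cancel] at this
    exact this
  have hcoef : x + (r:ℂ)*(d:ℂ)*hbar - hbar/2 = hbar * (x/hbar + (r:ℂ)*(d:ℂ) + 1/2 - 1) := by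
    field_simp
    ring
  unfold PhiD
  rw [hpow, hΓarg, hΓrec, hcoef]
  generalize hbar ^ (-(x/hbar) - ((r:ℂ)+1)*(d:ℂ)) = P
  generalize ((Real.sqrt (2*Real.pi) : ℝ) : ℂ) = S
  generalize hGG : Complex.Gamma (x/hbar + (r:ℂ)*(d:ℂ) + 1/2 - 1) = G at hG0 ⊢
  generalize hW : x/hbar + (r:ℂ)*(d:ℂ) + 1/2 - 1 = w at hw1 ⊢
  conv_rhs => rw [← mul_div_assoc]
  rw [div_eq_div_iff hG0 (mul_ne_zero hw1 hG0)]
  ring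

/-- Φ^d(x+rħ) = -r(d+1)ħ Φ^{d+1}(x) -/
lemma phiD_up (r : ℕ) (hr : 1 ≤ r) (hbar : ℂ) (hh : hbar ≠ 0) (x : ℂ) (d : ℕ) :
    PhiD r hbar d (x + (r:ℂ)*hbar) = (-((r:ℂ)*((d:ℂ)+1)*hbar)) * PhiD r hbar (d+1) x := by
  have hr0 : (r : ℂ) ≠ 0 := Nat.cast_ne_zero.mpr (by omega)
  have hd0 : ((d.factorial : ℂ)) ≠ 0 := Nat.cast_ne_zero.mpr (Nat.factorial_ne_zero d)
  have hd1 : ((d:ℂ) + 1) ≠ 0 := by exact_mod_cast Nat.cast_add_one_ne_zero (R := ℂ) d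
  have hdiv : (x + (r:ℂ)*hbar)/hbar = x/hbar + r := by field_simp
  have hpow : hbar ^ (-((x + (r:ℂ)*hbar)/hbar) - ((r:ℂ)+1)*(d:ℂ)) =
      hbar * hbar ^ (-(x/hbar) - ((r:ℂ)+1)*((d:ℂ)+1)) := by
    rw [hdiv, show -(x/hbar + (r:ℂ)) - ((r:ℂ)+1)*(d:ℂ)
        = 1 + (-(x/hbar) - ((r:ℂ)+1)*((d:ℂ)+1)) by ring,
      Complex.cpow_add _ _ hh, Complex.cpow_one]
  have hΓarg : (x + (r:ℂ)*hbar)/hbar + (r:ℂ)*(d:ℂ) + 1/2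
      = x/hbar + (r:ℂ)*((d:ℂ)+1) + 1/2 := by
    rw [hdiv]; ring
  unfold PhiD
  push_cast [Nat.factorial_succ]
  rw [hpow, hΓarg]
  conv_rhs => rw [← mul_div_assoc]
  generalize hbar ^ (-(x/hbar) - ((r:ℂ)+1)*((d:ℂ)+1)) = P
  generalize ((Real.sqrt (2*Real.pi) : ℝ) : ℂ) = S
  generalize hD : ((d:ℂ) + 1) = D at hd1 ⊢
  congr 1
  field_simp [hr0, hd0, hd1]
  ring

lemma summable_series (r : ℕ) (hr : 1 ≤ r) (hbar : ℂ) (hh : hbar ≠ 0) (t q y : ℂ)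
    (hy : ∀ n : ℤ, y / hbar + 1 / 2 ≠ (n : ℂ)) :
    Summable (fun d : ℕ =>
      ‖q ^ (r * d) * Complex.exp (t * hbar * (r : ℂ) * (d : ℂ)) * PhiD r hbar d y‖) := by
  set f : ℕ → ℂ :=
    fun d => q ^ (r * d) * Complex.exp (t * hbar * (r : ℂ) * (d : ℂ)) * PhiD r hbar d y with hf
  set c : ℕ → ℂ := fun d =>
    q^r * Complex.exp (t*hbar*(r:ℂ)) * (-(hbar ^ (-(r:ℂ) - 1) / ((r : ℂ) * ((d:ℂ) + 1)))) *
      (Complex.Gamma (y/hbar + (r:ℂ)*((d:ℕ):ℂ) + 1/2) /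
        Complex.Gamma (y/hbar + (r:ℂ)*((d:ℂ)+1) + 1/2)) with hc
  have key : ∀ d : ℕ, f (d+1) = c d * f d := by
    intro d
    simp only [hf, hc]
    rw [phiD_succ r hr hbar hh y hy d]
    rw [show r * (d+1) = r*d + r by ring, pow_add]
    rw [show (((d+1:ℕ)):ℂ) = (d:ℂ)+1 from by push_cast; ring]
    rw [show t * hbar * (r:ℂ) * ((d:ℂ)+1) = t*hbar*(r:ℂ)*(d:ℂ) + t*hbar*(r:ℂ) by ring,
      Complex.exp_add]
    ring
  -- Gamma ratio as reciprocal of a product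
  have hGr : ∀ d : ℕ,
      Complex.Gamma (y/hbar + (r:ℂ)*((d:ℕ):ℂ) + 1/2) /
        Complex.Gamma (y/hbar + (r:ℂ)*((d:ℂ)+1) + 1/2)
      = 1 / ∏ j ∈ Finset.range r, (y/hbar + (r:ℂ)*(d:ℂ) + 1/2 + (j:ℂ)) := by
    intro d
    have hw : ∀ k : ℕ, (y/hbar + (r:ℂ)*(d:ℂ) + 1/2) + (k:ℂ) ≠ 0 := fun k =>
      auxNe hy ((r*d+k : ℕ) : ℤ) (by push_cast; ring)
    have hG1 : Complex.Gamma (y/hbar + (r:ℂ)*((d:ℕ):ℂ) + 1/2) ≠ 0 :=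
      auxGamma hy ((r*d : ℕ) : ℤ) (by push_cast; ring)
    have := gammaAddNat (y/hbar + (r:ℂ)*(d:ℂ) + 1/2) hw r
    rw [show y/hbar + (r:ℂ)*((d:ℂ)+1) + 1/2 = (y/hbar + (r:ℂ)*(d:ℂ) + 1/2) + (r:ℕ) from by
      push_cast; ring, this, div_mul_eq_div_div, div_self hG1]
  -- the constant
  set K : ℝ := ‖q^r * Complex.exp (t*hbar*(r:ℂ))‖ * ‖hbar ^ (-(r:ℂ) - 1)‖ with hK
  set N : ℕ := max (⌈2*K⌉₊) (⌈‖y/hbar‖ + (r:ℝ) + 2⌉₊) with hN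
  have hcbound : ∀ d : ℕ, N ≤ d → ‖c d‖ ≤ 1/2 := by
    intro d hd
    have hdK : 2*K ≤ (d:ℝ) :=
      le_trans (Nat.le_ceil _) (by exact_mod_cast le_trans (le_max_left _ _) hd)
    have hdU : ‖y/hbar‖ + (r:ℝ) + 2 ≤ (d:ℝ) :=
      le_trans (Nat.le_ceil _) (by exact_mod_cast le_trans (le_max_right _ _) hd)
    have hK0 : 0 ≤ K := mul_nonneg (norm_nonneg _) (norm_nonneg _)
    simp only [hc]
    rw [hGr d, norm_mul, norm_mul, norm_neg, norm_div, norm_div, norm_one]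
    have hnd : ‖((d:ℂ)+1)‖ = (d:ℝ)+1 := by
      rw [show ((d:ℂ)+1) = ((d+1:ℕ):ℂ) from by push_cast; ring, RCLike.norm_natCast]
      push_cast; ring
    have hnr : ‖((r:ℂ))‖ = (r:ℝ) := RCLike.norm_natCast r
    have hprod : (1:ℝ) ≤ ‖∏ j ∈ Finset.range r, (y/hbar + (r:ℂ)*(d:ℂ) + 1/2 + (j:ℂ))‖ := by
      rw [norm_prod]
      have h0 : (1:ℝ) = ∏ _j ∈ Finset.range r, (1:ℝ) := by simp
      rw [h0]
      apply Finset.prod_le_prod (fun _ _ => by norm_num)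
      intro j hj
      have hjr : (j:ℝ) ≤ (r:ℝ) - 1 := by
        have := Finset.mem_range.mp hj
        have : j + 1 ≤ r := this
        have : ((j+1 : ℕ):ℝ) ≤ (r:ℝ) := by exact_mod_cast this
        push_cast at this; linarith
      have e : y/hbar + (r:ℂ)*(d:ℂ) + 1/2 + (j:ℂ)
          = ((r*d : ℕ):ℂ) - (-(y/hbar + 1/2 + (j:ℂ))) := by push_cast; ring
      rw [e]
      refine le_trans ?_ (norm_sub_norm_le _ _)
      rw [RCLike.norm_natCast, norm_neg]
      have h2 : ‖y/hbar + 1/2 + (j:ℂ)‖ ≤ ‖y/hbar‖ + 1/2 + (j:ℝ) := by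
        refine le_trans (norm_add_le _ _) ?_
        have := norm_add_le (y/hbar) (1/2 : ℂ)
        have h12 : ‖(1/2 : ℂ)‖ = 1/2 := by simp
        have hj2 : ‖((j:ℕ):ℂ)‖ = (j:ℝ) := RCLike.norm_natCast j
        rw [hj2]
        rw [h12] at this
        linarith
      have h3 : (d:ℝ) ≤ ((r*d : ℕ):ℝ) := by
        have : d ≤ r*d := Nat.le_mul_of_pos_left d (by omega)
        exact_mod_cast this
      linarith
    have hfrac : ‖hbar ^ (-(r:ℂ) - 1)‖ / ‖(r:ℂ) * ((d:ℂ)+1)‖ ≤ ‖hbar ^ (-(r:ℂ) - 1)‖ / ((d:ℝ)+1) := by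
      apply div_le_div_of_nonneg_left (norm_nonneg _) (by positivity)
      rw [norm_mul, hnd, hnr]
      have : (1:ℝ) ≤ (r:ℝ) := by exact_mod_cast hr
      nlinarith [Nat.cast_nonneg (α := ℝ) d]
    calc ‖q^r * Complex.exp (t*hbar*(r:ℂ))‖ * (‖hbar ^ (-(r:ℂ) - 1)‖ / ‖(r:ℂ) * ((d:ℂ)+1)‖) *
          (1 / ‖∏ j ∈ Finset.range r, (y/hbar + (r:ℂ)*(d:ℂ) + 1/2 + (j:ℂ))‖)
        ≤ ‖q^r * Complex.exp (t*hbar*(r:ℂ))‖ * (‖hbar ^ (-(r:ℂ) - 1)‖ / ((d:ℝ)+1)) * 1 := by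
          apply mul_le_mul
          · exact mul_le_mul_of_nonneg_left hfrac (norm_nonneg _)
          · rw [div_le_one (by linarith)]; exact hprod
          · positivity
          · positivity
      _ = K / ((d:ℝ)+1) := by rw [hK]; ring
      _ ≤ 1/2 := by
          rw [div_le_iff₀ (by positivity)]
          linarith
  apply summable_of_ratio_norm_eventually_le (r := 1/2) (by norm_num)
  filter_upwards [Filter.eventually_ge_atTop N] with d hd
  have hstep : ‖f (d+1)‖ ≤ 1/2 * ‖f d‖ := by
    rw [key d, norm_mul]
    exact mul_le_mul_of_nonneg_right (hcbound d hd) (norm_nonneg _)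
  rw [norm_norm, norm_norm]
  exact hstep

/-- The series `Φ(t,x) = Σ_{d≥0} q^{rd} e^{tħrd} Φ^d(x)` converges absolutely (also at `x − ħ`
and `x + rħ`), and satisfies the quantum curve equation
`Φ(t, x−ħ) + q^r e^{rtħ} Φ(t, x+rħ) − (x − ħ/2)·Φ(t,x) = 0`. -/
theorem quantum_curve_equation (r : ℕ) (hr : 1 ≤ r) (hbar : ℂ) (hh : hbar ≠ 0) (t q x : ℂ)
    (hx : ∀ n : ℤ, x / hbar + 1 / 2 ≠ (n : ℂ)) :
    Summable (fun d : ℕ =>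
        ‖q ^ (r * d) * Complex.exp (t * hbar * (r : ℂ) * (d : ℂ)) * PhiD r hbar d x‖) ∧
    Summable (fun d : ℕ =>
        ‖q ^ (r * d) * Complex.exp (t * hbar * (r : ℂ) * (d : ℂ)) * PhiD r hbar d (x - hbar)‖) ∧
    Summable (fun d : ℕ =>
        ‖q ^ (r * d) * Complex.exp (t * hbar * (r : ℂ) * (d : ℂ)) *
          PhiD r hbar d (x + (r : ℂ) * hbar)‖) ∧
    (∑' d : ℕ, q ^ (r * d) * Complex.exp (t * hbar * (r : ℂ) * (d : ℂ)) *
        PhiD r hbar d (x - hbar)) +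
      q ^ r * Complex.exp ((r : ℂ) * t * hbar) *
        (∑' d : ℕ, q ^ (r * d) * Complex.exp (t * hbar * (r : ℂ) * (d : ℂ)) *
          PhiD r hbar d (x + (r : ℂ) * hbar)) -
      (x - hbar / 2) *
        (∑' d : ℕ, q ^ (r * d) * Complex.exp (t * hbar * (r : ℂ) * (d : ℂ)) *
          PhiD r hbar d x) = 0 := by
  have hy2 : ∀ n : ℤ, (x - hbar) / hbar + 1 / 2 ≠ (n : ℂ) := by
    intro n h
    apply hx (n+1)
    rw [show (x - hbar)/hbar = x/hbar - 1 from by field_simp] at h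
    push_cast
    linear_combination h
  have hy3 : ∀ n : ℤ, (x + (r:ℂ)*hbar) / hbar + 1 / 2 ≠ (n : ℂ) := by
    intro n h
    apply hx (n - r)
    rw [show (x + (r:ℂ)*hbar)/hbar = x/hbar + r from by field_simp] at h
    push_cast
    linear_combination h
  have S1 := summable_series r hr hbar hh t q x hx
  have S2 := summable_series r hr hbar hh t q (x - hbar) hy2
  have S3 := summable_series r hr hbar hh t q (x + (r:ℂ)*hbar) hy3
  refine ⟨S1, S2, S3, ?_⟩
  set G : ℕ → ℂ := fun d => (r:ℂ) * (d:ℂ) * hbar *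
    (q ^ (r * d) * Complex.exp (t * hbar * (r:ℂ) * (d:ℂ)) * PhiD r hbar d x) with hG
  have hFs : Summable (fun d : ℕ =>
      q ^ (r * d) * Complex.exp (t * hbar * (r:ℂ) * (d:ℂ)) * PhiD r hbar d x) :=
    Summable.of_norm S1
  have hA : ∀ d : ℕ, q ^ (r*d) * Complex.exp (t*hbar*(r:ℂ)*(d:ℂ)) * PhiD r hbar d (x - hbar)
      = (x - hbar/2) *
          (q ^ (r * d) * Complex.exp (t * hbar * (r:ℂ) * (d:ℂ)) * PhiD r hbar d x) + G d := by
    intro d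
    rw [phiD_down r hbar hh x hx d]
    simp only [hG]
    ring
  have hB : ∀ d : ℕ, q^r * Complex.exp ((r:ℂ)*t*hbar) *
      (q ^ (r*d) * Complex.exp (t*hbar*(r:ℂ)*(d:ℂ)) * PhiD r hbar d (x + (r:ℂ)*hbar))
      = -G (d+1) := by
    intro d
    rw [phiD_up r hr hbar hh x d]
    simp only [hG]
    rw [show r*(d+1) = r*d + r by ring, pow_add,
      show (((d+1:ℕ)):ℂ) = (d:ℂ)+1 from by push_cast; ring,
      show t*hbar*(r:ℂ)*((d:ℂ)+1) = t*hbar*(r:ℂ)*(d:ℂ) + (r:ℂ)*t*hbar by ring, Complex.exp_add]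
    ring
  have hGs1 : Summable (fun d : ℕ => G (d+1)) := by
    have h2 : Summable (fun d : ℕ => q^r * Complex.exp ((r:ℂ)*t*hbar) *
        (q ^ (r*d) * Complex.exp (t*hbar*(r:ℂ)*(d:ℂ)) * PhiD r hbar d (x + (r:ℂ)*hbar))) :=
      (Summable.of_norm S3).mul_left _
    have h3 := h2.congr hB
    simpa using h3.neg
  have hGs : Summable G := by
    rw [← summable_nat_add_iff 1]
    exact hGs1
  have hG0 : G 0 = 0 := by simp [hG]
  have e1 : (∑' d : ℕ, q ^ (r * d) * Complex.exp (t * hbar * (r : ℂ) * (d : ℂ)) *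
        PhiD r hbar d (x - hbar))
      = (x - hbar/2) * (∑' d : ℕ, q ^ (r * d) * Complex.exp (t * hbar * (r:ℂ) * (d:ℂ)) *
          PhiD r hbar d x) + ∑' d : ℕ, G d := by
    rw [tsum_congr hA, Summable.tsum_add (hFs.mul_left _) hGs, tsum_mul_left]
  have e2 : q ^ r * Complex.exp ((r : ℂ) * t * hbar) *
      (∑' d : ℕ, q ^ (r * d) * Complex.exp (t * hbar * (r : ℂ) * (d : ℂ)) *
        PhiD r hbar d (x + (r : ℂ) * hbar))
      = -∑' d : ℕ, G (d+1) := by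
    rw [← tsum_mul_left, tsum_congr hB, tsum_neg]
  have e3 : ∑' d : ℕ, G d = ∑' d : ℕ, G (d+1) := by
    rw [Summable.tsum_eq_zero_add hGs, hG0, zero_add]
  rw [e1, e2, e3]
  ring
end

section
/- Fix an integer r ≥ 1, a nonzero complex number ħ, and a complex number x such that x/ħ + 1/2 is not a nonpositive real number (so all Gamma values below are nonzero); for real t and real q define Φ(t,q) := Σ_{d=0}^∞ q^{rd} e^{tħrd} Φ^d(x). Then Φ is differentiable in t and in q, and satisfies the evolution equation ∂Φ/∂t (t,q) = ħ · q · ∂Φ/∂q (t,q) for all real t and q. -/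
/-!
The wave function is the composite `Φ(t, q) = G(q ^ r * exp (t ħ r))` of the power series
`G z = ∑ Φ^d(x) z ^ d`. Since `Γ(s + 1) = s Γ(s)`, `‖1 / Γ‖` decreases along `w + n` once
`‖w + n‖ ≥ 1`, so it is bounded there and `‖Φ^d(x)‖ ≤ C K ^ d / d!`: `G` is entire. The chain rule
gives both derivatives, and the evolution equation reduces to
`ħ q ∂_q (q ^ r e^{tħr}) = ∂_t (q ^ r e^{tħr})`.
-/

open Complex Finset
open scoped Nat

namespace Complex

lemma norm_inv_Gamma_add_one_le {s : ℂ} (hs : 1 ≤ ‖s‖) :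
    ‖(Gamma (s + 1))⁻¹‖ ≤ ‖(Gamma s)⁻¹‖ := by
  rw [Gamma_add_one s (norm_pos_iff.mp (by linarith)), mul_inv, norm_mul, norm_inv]
  exact mul_le_of_le_one_left (norm_nonneg _) (inv_le_one_of_one_le₀ hs)

lemma exists_norm_inv_Gamma_add_nat_le (w : ℂ) :
    ∃ M, ∀ n : ℕ, ‖(Gamma (w + n))⁻¹‖ ≤ M := by
  set f : ℕ → ℝ := fun n => ‖(Gamma (w + n))⁻¹‖
  obtain ⟨N, hN⟩ := exists_nat_ge (‖w‖ + 1)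
  have hle_N : ∀ n ≥ N, f n ≤ f N := by
    intro n hn
    induction n, hn using Nat.le_induction with
    | base => rfl
    | succ n hn ih =>
      have hw : 1 ≤ ‖w + n‖ := by
        have := norm_add_le (w + n) (-w)
        have : (N : ℝ) ≤ n := by exact_mod_cast hn
        simp only [add_neg_cancel_comm, norm_neg, Complex.norm_natCast] at *
        linarith
      calc f (n + 1) = ‖(Gamma (w + n + 1))⁻¹‖ := by simp [f, add_assoc]
        _ ≤ f n := norm_inv_Gamma_add_one_le hw
        _ ≤ f N := ih
  refine ⟨∑ n ∈ range (N + 1), f n, fun n => ?_⟩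
  have hsingle : ∀ m ≤ N, f m ≤ ∑ n ∈ range (N + 1), f n := fun m hm =>
    single_le_sum (f := f) (fun _ _ => norm_nonneg _) (mem_range.mpr (Nat.lt_succ_of_le hm))
  rcases le_total n N with hn | hn
  · exact hsingle n hn
  · exact (hle_N n hn).trans (hsingle N le_rfl)

end Complex

lemma differentiable_tsum_mul_pow_of_norm_le {c : ℕ → ℂ} {C K : ℝ}
    (hc : ∀ n, ‖c n‖ ≤ C * K ^ n / n !) : Differentiable ℂ fun z => ∑' n, c n * z ^ n := by
  set p := FormalMultilinearSeries.ofScalars ℂ c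
  have hp : p.radius = ⊤ := by
    refine p.radius_eq_top_of_summable_norm fun ρ => ?_
    refine Summable.of_nonneg_of_le (fun n => by positivity) (fun n => ?_)
      ((Real.summable_pow_div_factorial (K * ρ)).mul_left C)
    calc ‖p n‖ * ρ ^ n = ‖c n‖ * ρ ^ n := by rw [FormalMultilinearSeries.ofScalars_norm]
      _ ≤ C * K ^ n / n ! * ρ ^ n := by gcongr; exact hc n
      _ = C * ((K * ρ) ^ n / n !) := by ring
  have hsum : (fun z : ℂ => ∑' n, c n * z ^ n) = p.sum :=
    (FormalMultilinearSeries.ofScalarsSum_eq_tsum c).symm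
  have := (p.hasFPowerSeriesOnBall (by simp [hp])).differentiableOn
  rw [hp, Metric.eball_top, differentiableOn_univ] at this
  rwa [hsum]

lemma PhiD_eq_mul_inv_Gamma {r : ℕ} {hbar : ℂ} (hh : hbar ≠ 0) (x : ℂ) (d : ℕ) :
    PhiD r hbar d x = (Real.sqrt (2 * Real.pi) : ℂ) * hbar ^ (-(x / hbar)) *
      ((-hbar ^ (-((r : ℂ) + 1)) / r) ^ d / d !) *
        (Gamma (x / hbar + 1 / 2 + (r * d : ℕ)))⁻¹ := by
  have hcpow : hbar ^ (-(x / hbar) - ((r : ℂ) + 1) * d) =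
      hbar ^ (-(x / hbar)) * (hbar ^ (-((r : ℂ) + 1))) ^ d := by
    rw [sub_eq_add_neg, ← neg_mul, mul_comm, cpow_add _ _ hh, cpow_nat_mul]
  rw [PhiD, hcpow, div_pow, neg_pow]
  push_cast
  ring_nf

lemma exists_norm_PhiD_le {r : ℕ} {hbar : ℂ} (hh : hbar ≠ 0) (x : ℂ) :
    ∃ C K : ℝ, ∀ d : ℕ, ‖PhiD r hbar d x‖ ≤ C * K ^ d / d ! := by
  obtain ⟨M, hM⟩ := exists_norm_inv_Gamma_add_nat_le (x / hbar + 1 / 2)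
  refine ⟨‖(Real.sqrt (2 * Real.pi) : ℂ) * hbar ^ (-(x / hbar))‖ * M,
    ‖-hbar ^ (-((r : ℂ) + 1)) / r‖, fun d => ?_⟩
  rw [PhiD_eq_mul_inv_Gamma hh, norm_mul, norm_mul, norm_div, norm_pow, Complex.norm_natCast]
  calc _ ≤ ‖(Real.sqrt (2 * Real.pi) : ℂ) * hbar ^ (-(x / hbar))‖ *
        (‖-hbar ^ (-((r : ℂ) + 1)) / r‖ ^ d / d !) * M := by gcongr; exact hM _
    _ = _ := by ring

theorem wave_function_t_evolution_general (r : ℕ) (hbar : ℂ) (hh : hbar ≠ 0) (x : ℂ) :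
    ∃ Ft Fq : ℝ → ℝ → ℂ,
      (∀ t q : ℝ, HasDerivAt
        (fun t' : ℝ => ∑' d : ℕ,
          (q : ℂ) ^ (r * d) * Complex.exp ((t' : ℂ) * hbar * (r : ℂ) * (d : ℂ)) * PhiD r hbar d x)
        (Ft t q) t) ∧
      (∀ t q : ℝ, HasDerivAt
        (fun q' : ℝ => ∑' d : ℕ,
          (q' : ℂ) ^ (r * d) * Complex.exp ((t : ℂ) * hbar * (r : ℂ) * (d : ℂ)) * PhiD r hbar d x)
        (Fq t q) q) ∧
      (∀ t q : ℝ, Ft t q = hbar * (q : ℂ) * Fq t q) := by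
  set G : ℂ → ℂ := fun z => ∑' d, PhiD r hbar d x * z ^ d
  obtain ⟨C, K, hCK⟩ := exists_norm_PhiD_le hh x
  have hG : Differentiable ℂ G := differentiable_tsum_mul_pow_of_norm_le hCK
  set w : ℂ → ℂ → ℂ := fun t q => q ^ r * exp (t * hbar * r)
  have hΦ : ∀ t q : ℂ, ∑' d : ℕ, q ^ (r * d) * exp (t * hbar * r * d) * PhiD r hbar d x =
      G (w t q) := fun t q => tsum_congr fun d => by
    rw [mul_pow, ← pow_mul, ← exp_nat_mul]
    ring_nf
  refine ⟨fun t q => deriv G (w t q) * (w t q * (hbar * r)),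
    fun t q => deriv G (w t q) * (r * (q : ℂ) ^ (r - 1) * exp (t * hbar * r)), ?_, ?_, ?_⟩
  · intro t q
    simp only [hΦ]
    have hexp : HasDerivAt (fun s : ℂ => exp (s * hbar * r)) (exp (t * hbar * r) * (hbar * r)) t :=
      (((hasDerivAt_id (t : ℂ)).mul_const hbar).mul_const (r : ℂ)).cexp.congr_deriv (by simp)
    exact ((hG _).hasDerivAt.comp _
      ((hexp.const_mul ((q : ℂ) ^ r)).congr_deriv (by ring))).comp_ofReal
  · intro t q
    simp only [hΦ]
    exact ((hG _).hasDerivAt.comp _ ((hasDerivAt_pow r (q : ℂ)).mul_const _)).comp_ofReal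
  · intro t q
    rcases r with _ | r
    · simp
    · simp only [w, Nat.add_sub_cancel, pow_succ]
      ring

/-- The wave function `Φ(t,q) = Σ_{d≥0} q^{rd} e^{tħrd} Φ^d(x)` (as a function of real `t`, `q`)
is differentiable in `t` and in `q`, and satisfies the `t`-evolution equation
`∂Φ/∂t = ħ · q · ∂Φ/∂q`. -/
theorem wave_function_t_evolution (r : ℕ) (hr : 1 ≤ r) (hbar : ℂ) (hh : hbar ≠ 0) (x : ℂ)
    (hx : ∀ s : ℝ, s ≤ 0 → x / hbar + 1 / 2 ≠ (s : ℂ)) :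
    ∃ Ft Fq : ℝ → ℝ → ℂ,
      (∀ t q : ℝ, HasDerivAt
        (fun t' : ℝ => ∑' d : ℕ,
          (q : ℂ) ^ (r * d) * Complex.exp ((t' : ℂ) * hbar * (r : ℂ) * (d : ℂ)) * PhiD r hbar d x)
        (Ft t q) t) ∧
      (∀ t q : ℝ, HasDerivAt
        (fun q' : ℝ => ∑' d : ℕ,
          (q' : ℂ) ^ (r * d) * Complex.exp ((t : ℂ) * hbar * (r : ℂ) * (d : ℂ)) * PhiD r hbar d x)
        (Fq t q) q) ∧
      (∀ t q : ℝ, Ft t q = hbar * (q : ℂ) * Fq t q) :=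
  wave_function_t_evolution_general r hbar hh x
end

section
/- For all integers d ≥ 1 and k with 0 ≤ k ≤ d − 1, the following identity holds in the rational numbers: Σ_{j=0}^{d−1−k} (−1)^{j + d − 1 − k} · d! / ((d − j) · k! · (d − 1 − k − j)! · j!) = 1. -/
/-!
With `d = m + k + 1`, the `j`-th summand is `(-1)^(m-j) · C(d, j) · C(k + (m - j), k)`, and
`(-1)^n C(k + n, k)` is the generalized binomial coefficient `C(-(k+1), n)`. The sum is therefore
the Chu–Vandermonde convolution computing `C(d - (k+1), m) = C(m, m) = 1`.
-/

open Finset Nat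

theorem sum_antidiagonal_neg_one_pow_mul_choose_mul_choose (m k : ℕ) :
    ∑ p ∈ antidiagonal m, (-1 : ℤ) ^ p.2 * ((m + k + 1).choose p.1 * (k + p.2).choose k) = 1 := by
  have h := Ring.add_choose_eq (r := ((m + k + 1 : ℕ) : ℤ)) (s := -((k + 1 : ℕ) : ℤ)) m
    (Commute.all _ _)
  rw [show ((m + k + 1 : ℕ) : ℤ) + -((k + 1 : ℕ) : ℤ) = m by push_cast; ring,
    Ring.choose_natCast, Nat.choose_self, Nat.cast_one] at h
  refine (sum_congr rfl fun p _ => ?_).trans h.symm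
  rw [Ring.choose_natCast, Ring.choose_neg,
    show ((k + 1 : ℕ) : ℤ) + p.2 - 1 = ((k + p.2 : ℕ) : ℤ) by push_cast; ring,
    Ring.choose_natCast, Nat.choose_symm_add, Units.smul_def, Int.coe_negOnePow_natCast,
    smul_eq_mul]
  ring

theorem cast_factorial_div_eq_choose_mul_choose (j k l : ℕ) :
    ((j + k + l + 1)! : ℚ) / ((k + l + 1 : ℕ) * k ! * l ! * j !) =
      (j + k + l + 1).choose j * (k + l).choose k := by
  rw [show j + k + l + 1 = j + (k + l + 1) by ring, Nat.cast_add_choose, Nat.cast_add_choose,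
    Nat.factorial_succ]
  push_cast
  field_simp

/-- The final combinatorial lemma of Appendix III (Eq. (cbl)):
for integers `d ≥ 1` and `0 ≤ k ≤ d − 1`,
`Σ_{j=0}^{d−1−k} (−1)^{j+d−1−k} d!/((d−j)·k!·(d−1−k−j)!·j!) = 1` in `ℚ`. -/
theorem appendix_combinatorial_identity (d k : ℕ) (hd : 1 ≤ d) (hk : k ≤ d - 1) :
    ∑ j ∈ Finset.range (d - k), ((-1 : ℚ)) ^ (j + d - 1 - k) * (d.factorial : ℚ) /
        (((d - j : ℕ) : ℚ) * (k.factorial : ℚ) * (((d - 1 - k - j).factorial : ℚ)) *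
          ((j.factorial : ℚ))) = 1 := by
  obtain ⟨m, rfl⟩ : ∃ m, d = m + k + 1 := ⟨d - 1 - k, by omega⟩
  have key := congrArg (Int.cast : ℤ → ℚ) (sum_antidiagonal_neg_one_pow_mul_choose_mul_choose m k)
  rw [Nat.sum_antidiagonal_eq_sum_range_succ
    (fun i j => (-1 : ℤ) ^ j * ((m + k + 1).choose i * (k + j).choose k))] at key
  push_cast at key
  rw [show m + k + 1 - k = m + 1 by omega]
  refine (sum_congr rfl fun j hj => ?_).trans key
  obtain ⟨l, rfl⟩ := Nat.exists_eq_add_of_le (Nat.lt_succ_iff.mp (mem_range.mp hj))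
  rw [show j + (j + l + k + 1) - 1 - k = 2 * j + l by omega,
    show j + l + k + 1 - j = k + l + 1 by omega, show j + l + k + 1 - 1 - k - j = l by omega,
    show j + l + k + 1 = j + k + l + 1 by ring, Nat.add_sub_cancel_left, mul_div_assoc,
    cast_factorial_div_eq_choose_mul_choose, pow_add, pow_mul, neg_one_sq, one_pow, one_mul]
end
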